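/- arXiv:2508.20231 — 2 statements merged into one kernel-verified Lean document; each statement's English description precedes it below -/
import Mathlib

section
/- Let D = [[A, B], [Bᵀ, C]] be a symmetric block matrix where A and C are symmetric matrices satisfying A ⪰ αI and C ⪰ βI for some α, β ≥ 0. If the largest singular value of B satisfies σ(B)² ≤ αβ, then D is positive semidefinite. -/
open Matrix

theorem blockMatrix_posSemidef
    {m k : ℕ}
    (A : Matrix (Fin m) (Fin m) ℝ) (C : Matrix (Fin k) (Fin k) ℝ)
    (B : Matrix (Fin m) (Fin k) ℝ)
    (α β : ℝ) (hα : 0 ≤ α) (hβ : 0 ≤ β)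
    (hA : A.IsSymm) (hC : C.IsSymm)
    (hAα : (A - α • (1 : Matrix (Fin m) (Fin m) ℝ)).PosSemidef)
    (hCβ : (C - β • (1 : Matrix (Fin k) (Fin k) ℝ)).PosSemidef)
    (σ : ℝ) (hσ0 : 0 ≤ σ)
    (hσ : ∀ x : Fin k → ℝ,
      ∑ i, (B.mulVec x i) ^ 2 ≤ σ ^ 2 * ∑ j, (x j) ^ 2)
    (hσαβ : σ ^ 2 ≤ α * β) :
    (Matrix.fromBlocks A B Bᵀ C).PosSemidef := by
  refine posSemidef_iff_dotProduct_mulVec.mpr ⟨?_, ?_⟩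
  · unfold Matrix.IsHermitian
    rw [show (fromBlocks A B Bᵀ C)ᴴ = (fromBlocks A B Bᵀ C)ᵀ from rfl,
      fromBlocks_transpose, hA.eq, hC.eq, transpose_transpose]
  · intro z
    have hz : z = Sum.elim (z ∘ Sum.inl) (z ∘ Sum.inr) := (Sum.elim_comp_inl_inr z).symm
    set x := z ∘ Sum.inl
    set y := z ∘ Sum.inr
    rw [hz, fromBlocks_mulVec]
    rw [show star (Sum.elim x y) = Sum.elim x y from rfl, sumElim_dotProduct_sumElim,
      dotProduct_add, dotProduct_add]
    -- basic quantities
    set s1 : ℝ := ∑ i, (x i) ^ 2 with hs1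
    set s2 : ℝ := ∑ j, (y j) ^ 2 with hs2
    have hs1' : 0 ≤ s1 := Finset.sum_nonneg fun i _ => sq_nonneg _
    have hs2' : 0 ≤ s2 := Finset.sum_nonneg fun i _ => sq_nonneg _
    -- A lower bound
    have hAx : α * s1 ≤ x ⬝ᵥ A *ᵥ x := by
      have h := hAα.dotProduct_mulVec_nonneg x
      simp only [star_trivial, sub_mulVec, smul_mulVec, one_mulVec,
        dotProduct_sub, dotProduct_smul, smul_eq_mul] at h
      have hxx : x ⬝ᵥ x = s1 := by
        simp [dotProduct, hs1, sq]
      linarith [h, hxx ▸ h]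
    have hCy : β * s2 ≤ y ⬝ᵥ C *ᵥ y := by
      have h := hCβ.dotProduct_mulVec_nonneg y
      simp only [star_trivial, sub_mulVec, smul_mulVec, one_mulVec,
        dotProduct_sub, dotProduct_smul, smul_eq_mul] at h
      have hyy : y ⬝ᵥ y = s2 := by
        simp [dotProduct, hs2, sq]
      linarith [h, hyy ▸ h]
    -- cross term
    have hcross : y ⬝ᵥ Bᵀ *ᵥ x = x ⬝ᵥ B *ᵥ y := by
      rw [dotProduct_mulVec, vecMul_transpose, dotProduct_comm]
    set c : ℝ := x ⬝ᵥ B *ᵥ y with hc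
    have hc2 : c ^ 2 ≤ s1 * (σ ^ 2 * s2) := by
      have hcs : c ^ 2 ≤ s1 * ∑ i, (B *ᵥ y) i ^ 2 := by
        have h2 := Finset.sum_mul_sq_le_sq_mul_sq Finset.univ x (B *ᵥ y)
        calc c ^ 2 = (∑ i, x i * (B *ᵥ y) i) ^ 2 := by rw [hc]; rfl
          _ ≤ (∑ i, x i ^ 2) * ∑ i, (B *ᵥ y) i ^ 2 := h2
          _ = s1 * ∑ i, (B *ᵥ y) i ^ 2 := by rw [hs1]
      have hB := hσ y
      nlinarith
    have hc3 : c ^ 2 ≤ α * β * (s1 * s2) := by nlinarith [mul_nonneg hs1' hs2']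
    have habs : 2 * c ≥ -(α * s1 + β * s2) := by
      nlinarith [sq_nonneg (α * s1 - β * s2), mul_nonneg (mul_nonneg hα hs1') (mul_nonneg hβ hs2'),
        mul_nonneg hα hs1', mul_nonneg hβ hs2']
    have key : 0 ≤ x ⬝ᵥ A *ᵥ x + c + (y ⬝ᵥ Bᵀ *ᵥ x + y ⬝ᵥ C *ᵥ y) := by
      rw [hcross]
      linarith
    exact key
end

section
/- Let G ∈ ℝ^{m×m} be a symmetric matrix with eigendecomposition G = U diag(λ₁,…,λ_m) Uᵀ, and let 0 < ρ₋ ≤ ρ₊. Let S_{ρ₋,ρ₊} be the set of symmetric m×m matrices whose eigenvalues all lie in [ρ₋, ρ₊]. Then the minimum of ⟨G, R⟩ = tr(GR) over R ∈ S_{ρ₋,ρ₊} is attained at R* = U diag(r₁,…,r_m) Uᵀ where r_k = ρ₋ if λ_k > 0 and r_k = ρ₊ if λ_k < 0 (and r_k arbitrary in [ρ₋,ρ₊] if λ_k = 0), with minimum value ∑_k (ρ₋ max(λ_k,0) + ρ₊ min(λ_k,0)). -/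
open Matrix

/-- The spectral box: symmetric matrices with quadratic form between
`ρ₋ ‖x‖²` and `ρ₊ ‖x‖²`. -/
def spectralBox (m : ℕ) (ρm ρp : ℝ) : Set (Matrix (Fin m) (Fin m) ℝ) :=
  {R | R.IsSymm ∧ ∀ x : Fin m → ℝ,
    ρm * ∑ i, (x i) ^ 2 ≤ x ⬝ᵥ R.mulVec x ∧
    x ⬝ᵥ R.mulVec x ≤ ρp * ∑ i, (x i) ^ 2}

theorem spectralBox_lmo
    {m : ℕ} (ρm ρp : ℝ) (hρm : 0 < ρm) (hρ : ρm ≤ ρp)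
    (U : Matrix (Fin m) (Fin m) ℝ) (hU : U ∈ Matrix.orthogonalGroup (Fin m) ℝ)
    (lam : Fin m → ℝ)
    (G : Matrix (Fin m) (Fin m) ℝ)
    (hG : G = U * Matrix.diagonal lam * Uᵀ)
    (r : Fin m → ℝ)
    (hrpos : ∀ k, 0 < lam k → r k = ρm)
    (hrneg : ∀ k, lam k < 0 → r k = ρp)
    (hrzero : ∀ k, lam k = 0 → ρm ≤ r k ∧ r k ≤ ρp) :
    U * Matrix.diagonal r * Uᵀ ∈ spectralBox m ρm ρp ∧
    (G * (U * Matrix.diagonal r * Uᵀ)).trace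
      = ∑ k, (ρm * max (lam k) 0 + ρp * min (lam k) 0) ∧
    ∀ R ∈ spectralBox m ρm ρp,
      (G * (U * Matrix.diagonal r * Uᵀ)).trace ≤ (G * R).trace := by
  have hUU : U * Uᵀ = 1 := by
    have := (Matrix.mem_orthogonalGroup_iff (Fin m) ℝ).mp hU
    simpa using this
  have hUtU : Uᵀ * U = 1 := by
    have := (Matrix.mem_orthogonalGroup_iff' (Fin m) ℝ).mp hU
    simpa using this
  have hr : ∀ k, ρm ≤ r k ∧ r k ≤ ρp := by
    intro k
    rcases lt_trichotomy (lam k) 0 with h | h | h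
    · simp [hrneg k h, hρ]
    · exact hrzero k h
    · simp [hrpos k h, hρ]
  -- quadratic form of U * diagonal r * Uᵀ
  have hquad : ∀ x : Fin m → ℝ,
      x ⬝ᵥ (U * Matrix.diagonal r * Uᵀ).mulVec x
        = ∑ i, r i * (Uᵀ.mulVec x i) ^ 2 := by
    intro x
    have h1 : (U * Matrix.diagonal r * Uᵀ).mulVec x
        = U.mulVec ((Matrix.diagonal r).mulVec (Uᵀ.mulVec x)) := by
      rw [Matrix.mul_assoc]; simp [Matrix.mulVec_mulVec]
    rw [h1, Matrix.dotProduct_mulVec, ← Matrix.mulVec_transpose]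
    simp [Matrix.mulVec_diagonal, dotProduct]
    ring_nf
    exact Finset.sum_congr rfl fun i _ => by ring
  have hnorm : ∀ x : Fin m → ℝ, ∑ i, (Uᵀ.mulVec x i) ^ 2 = ∑ i, (x i) ^ 2 := by
    intro x
    have : (Uᵀ.mulVec x) ⬝ᵥ (Uᵀ.mulVec x) = x ⬝ᵥ x := by
      rw [Matrix.mulVec_transpose U x, ← Matrix.dotProduct_mulVec,
        ← Matrix.mulVec_transpose U x, Matrix.mulVec_mulVec, hUU, Matrix.one_mulVec]
    simpa [dotProduct, sq] using this
  have hmem : U * Matrix.diagonal r * Uᵀ ∈ spectralBox m ρm ρp := by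
    constructor
    · show (U * Matrix.diagonal r * Uᵀ)ᵀ = _
      simp [Matrix.transpose_mul, Matrix.diagonal_transpose, Matrix.mul_assoc]
    · intro x
      rw [hquad x]
      constructor
      · calc ρm * ∑ i, x i ^ 2 = ∑ i, ρm * (Uᵀ.mulVec x i) ^ 2 := by
              rw [← hnorm x, Finset.mul_sum]
          _ ≤ ∑ i, r i * (Uᵀ.mulVec x i) ^ 2 :=
              Finset.sum_le_sum fun i _ =>
                mul_le_mul_of_nonneg_right (hr i).1 (sq_nonneg _)
      · calc ∑ i, r i * (Uᵀ.mulVec x i) ^ 2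
              ≤ ∑ i, ρp * (Uᵀ.mulVec x i) ^ 2 :=
              Finset.sum_le_sum fun i _ =>
                mul_le_mul_of_nonneg_right (hr i).2 (sq_nonneg _)
          _ = ρp * ∑ i, x i ^ 2 := by rw [← hnorm x, Finset.mul_sum]
  -- trace value
  have hprod : G * (U * Matrix.diagonal r * Uᵀ)
      = U * Matrix.diagonal (fun k => lam k * r k) * Uᵀ := by
    rw [hG]
    have h2 : Uᵀ * (U * (Matrix.diagonal r * Uᵀ)) = Matrix.diagonal r * Uᵀ := by
      rw [← Matrix.mul_assoc, hUtU, one_mul]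
    simp only [Matrix.mul_assoc, h2, ← Matrix.diagonal_mul_diagonal]
  have htrace : (G * (U * Matrix.diagonal r * Uᵀ)).trace
      = ∑ k, (ρm * max (lam k) 0 + ρp * min (lam k) 0) := by
    rw [hprod, Matrix.trace_mul_cycle, hUtU, one_mul, Matrix.trace_diagonal]
    refine Finset.sum_congr rfl fun k _ => ?_
    rcases lt_trichotomy (lam k) 0 with h | h | h
    · rw [hrneg k h, max_eq_right h.le, min_eq_left h.le]; ring
    · simp [h]
    · rw [hrpos k h, max_eq_left h.le, min_eq_right h.le]; ring
  refine ⟨hmem, htrace, ?_⟩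
  rintro R ⟨-, hRbox⟩
  rw [htrace]
  have hGR : (G * R).trace = ∑ k, lam k * ((Uᵀ * (R * U)) k k) := by
    rw [hG, Matrix.mul_assoc, Matrix.mul_assoc, Matrix.trace_mul_comm,
      Matrix.mul_assoc, Matrix.mul_assoc]
    simp [Matrix.trace, Matrix.diag, Matrix.diagonal_mul]
  rw [hGR]
  refine Finset.sum_le_sum fun k _ => ?_
  have hqk : (Uᵀ * (R * U)) k k = (fun i => U i k) ⬝ᵥ R.mulVec (fun i => U i k) := by
    simp [Matrix.mul_apply, dotProduct, Matrix.mulVec]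
  have hnk : ∑ i, (U i k) ^ 2 = 1 := by
    have := congrArg (fun M => M k k) hUtU
    simpa [Matrix.mul_apply, Matrix.one_apply, sq] using this
  obtain ⟨hlo, hhi⟩ := hRbox (fun i => U i k)
  rw [hnk, mul_one] at hlo hhi
  rw [hqk]
  rcases le_or_gt 0 (lam k) with h | h
  · rw [max_eq_left h, min_eq_right h]
    nlinarith
  · rw [max_eq_right h.le, min_eq_left h.le]
    nlinarith
end
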